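/- Let n ≥ 1, k ≥ 2, and f : 𝔽_{2^n} → ℤ/2^kℤ. Define g(x) = f(x) + 2^{k−2}·ι(Tr(x)) + 2^{k−1}·ι(σ(1,x)), h(x) = g(x) + 2^{k−1}·ι(Tr(x)), and let f̃ : 𝔽_{2^n} → ℤ/2^{k−1}ℤ be the reduction of f modulo 2^{k−1}. Then f is nega-ℤ_{2^k}-bent if and only if the following three conditions hold simultaneously: (1) g is gbent; (2) h is gbent; (3) f̃ is ℤ_{2^{k−1}}-bent. -/

import Mathlib

noncomputable section

/-- The absolute trace Tr(x) = x + x² + x⁴ + … + x^{2^{n−1}}. -/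
def Tr {F : Type} [Field F] (n : ℕ) (x : F) : F :=
  ∑ i ∈ Finset.range n, x ^ (2 ^ i)

/-- σ(c,x) = Σ_{0 ≤ i < j ≤ n−1} (cx)^{2^i} (cx)^{2^j} -/
def sig {F : Type} [Field F] (n : ℕ) (c x : F) : F :=
  ∑ j ∈ Finset.range n, ∑ i ∈ Finset.range j, (c * x) ^ (2 ^ i) * (c * x) ^ (2 ^ j)

/-- ι(e): the integer lift of e ∈ {0,1} ⊆ F. -/
def iotaN {F : Type} [Field F] [DecidableEq F] (e : F) : ℕ :=
  if e = 1 then 1 else 0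

/-- ι(e) viewed in ℤ/2^kℤ. -/
def iotaZ {F : Type} [Field F] [DecidableEq F] (k : ℕ) (e : F) : ZMod (2 ^ k) :=
  if e = 1 then 1 else 0

/-- ζ_{2^k} = e^{2πi/2^k}. -/
def zeta (k : ℕ) : ℂ := Complex.exp (2 * Real.pi * Complex.I / 2 ^ k)

/-- c₀ ∈ {0,1} ⊆ F equals 1 if c is odd and 0 if c is even. -/
def czero {F : Type} [Field F] (k : ℕ) (c : ZMod (2 ^ k)) : F :=
  if c.val % 2 = 1 then 1 else 0

/-- The generalized Walsh–Hadamard transform at level 2^j: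
H_f(c,u) = Σ_{x ∈ F} ζ_{2^j}^{c·f(x)} (−1)^{ι(Tr(ux))}. -/
def gWH {F : Type} [Field F] [Fintype F] [DecidableEq F] (n j : ℕ)
    (f : F → ZMod (2 ^ j)) (c : ZMod (2 ^ j)) (u : F) : ℂ :=
  ∑ x : F, zeta j ^ (c * f x).val * (-1 : ℂ) ^ (iotaN (Tr n (u * x)))

/-- The nega-ℤ_{2^k}-Hadamard transform
K_f(c,u) = Σ_{x ∈ F} (−1)^{ι(Tr(ux)) + ι(σ(c₀,x))} ζ_{2^k}^{c·f(x)} i^{ι(Tr(c₀x))}. -/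
def negaK {F : Type} [Field F] [Fintype F] [DecidableEq F] (n k : ℕ)
    (f : F → ZMod (2 ^ k)) (c : ZMod (2 ^ k)) (u : F) : ℂ :=
  ∑ x : F, (-1 : ℂ) ^ (iotaN (Tr n (u * x)) + iotaN (sig n (czero k c) x)) *
    zeta k ^ (c * f x).val * Complex.I ^ (iotaN (Tr n (czero k c * x)))

/-! For odd `c` we have `c₀ = 1`, `ζ_{2^k}^{c·2^{k-2}} = i^c` and `ζ_{2^k}^{c·2^{k-1}} = -1`,
so the factors `i^{Tr(x)}` and `(-1)^{σ(1,x)}` of the nega-Hadamard transform are absorbed into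
`ζ_{2^k}^{c·g(x)}` when `c ≡ 1 (mod 4)`, and into `ζ_{2^k}^{c·h(x)}` when `c ≡ 3 (mod 4)`
because `h = f + 3·2^{k-2}·Tr + 2^{k-1}·σ(1,·)` and `3c ≡ 1 (mod 4)`. For even `c = 2c'` we
have `c₀ = 0` and `ζ_{2^k}^2 = ζ_{2^{k-1}}`, so `K_f(c,u) = H_{f̃}(c',u)`. Finally
`|H_g(c,u)|² = H_g(c,u)·H_g(c,u)^*` is a rational polynomial in the primitive root `ζ_{2^k}^c`;
all primitive `2^k`-th roots of unity have the same minimal polynomial over `ℚ`, so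
`|H_g(c,u)|² = 2^n` for `c = 1` forces it for every odd `c`. -/

open Polynomial

theorem IsPrimitiveRoot.normSq_aeval_eq_of_eq_ratCast {N : ℕ} (hN : 0 < N) {ζ ζ' : ℂ}
    (hζ : IsPrimitiveRoot ζ N) (hζ' : IsPrimitiveRoot ζ' N) (p : ℚ[X]) {r : ℚ}
    (h : Complex.normSq (aeval ζ p) = r) : Complex.normSq (aeval ζ' p) = r := by
  have key : ∀ {μ : ℂ}, IsPrimitiveRoot μ N →
      aeval μ (p * p.comp (X ^ (N - 1)) - C r) = Complex.normSq (aeval μ p) - r := by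
    intro μ hμ
    have hconj : μ ^ (N - 1) = (starRingEnd ℂ) μ := by
      rw [← Complex.inv_eq_conj (hμ.norm'_eq_one hN.ne')]
      refine eq_inv_of_mul_eq_one_left ?_
      rw [← pow_succ, Nat.sub_add_cancel hN, hμ.pow_eq_one]
    have hconjp : aeval ((starRingEnd ℂ) μ) p = (starRingEnd ℂ) (aeval μ p) :=
      aeval_algHom_apply (Complex.conjAe.toAlgHom.restrictScalars ℚ) μ p
    rw [map_sub, map_mul, aeval_comp, map_pow, aeval_X, hconj, hconjp, Complex.mul_conj, aeval_C,
      eq_ratCast]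
  have hmin : minpoly ℚ ζ = minpoly ℚ ζ' := by
    rw [← cyclotomic_eq_minpoly_rat hζ hN, cyclotomic_eq_minpoly_rat hζ' hN]
  have hroot : aeval ζ' (p * p.comp (X ^ (N - 1)) - C r) = 0 := by
    rw [← minpoly.dvd_iff, ← hmin, minpoly.dvd_iff, key hζ, h, Complex.ofReal_ratCast,
      sub_self]
  rw [key hζ', sub_eq_zero] at hroot
  exact_mod_cast hroot

lemma isPrimitiveRoot_zeta (k : ℕ) : IsPrimitiveRoot (zeta k) (2 ^ k) := by
  unfold zeta
  convert Complex.isPrimitiveRoot_exp (2 ^ k) (by positivity) using 3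
  push_cast
  ring

lemma zeta_pow_two_pow {j k : ℕ} (h : j ≤ k) : zeta k ^ 2 ^ j = zeta (k - j) := by
  obtain ⟨m, rfl⟩ := Nat.exists_eq_add_of_le' h
  rw [zeta, zeta, ← Complex.exp_nat_mul, Nat.add_sub_cancel]
  congr 1
  push_cast
  rw [pow_add]
  field_simp

lemma zeta_two : zeta 2 = Complex.I := by
  rw [zeta]
  convert Complex.exp_pi_div_two_mul_I using 2
  ring

lemma zeta_pow_eq_of_modEq (k : ℕ) {a b : ℕ} (h : a ≡ b [MOD 2 ^ k]) :
    zeta k ^ a = zeta k ^ b := by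
  have hζ := isPrimitiveRoot_zeta k
  rw [← Nat.mod_add_div a (2 ^ k), ← Nat.mod_add_div b (2 ^ k),
    show a % 2 ^ k = b % 2 ^ k from h, pow_add, pow_add, pow_mul, pow_mul, hζ.pow_eq_one,
    one_pow, one_pow]

lemma zeta_pow_val_mul (k : ℕ) (a b : ZMod (2 ^ k)) :
    zeta k ^ (a * b).val = zeta k ^ (a.val * b.val) :=
  zeta_pow_eq_of_modEq k (by rw [ZMod.val_mul]; exact Nat.mod_modEq _ _)

lemma zeta_pow_val_add (k : ℕ) (a b : ZMod (2 ^ k)) :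
    zeta k ^ (a + b).val = zeta k ^ a.val * zeta k ^ b.val := by
  rw [← pow_add]
  exact zeta_pow_eq_of_modEq k (by rw [ZMod.val_add]; exact Nat.mod_modEq _ _)

lemma zeta_pow_val_natCast (k m : ℕ) : zeta k ^ (m : ZMod (2 ^ k)).val = zeta k ^ m :=
  zeta_pow_eq_of_modEq k (by rw [ZMod.val_natCast]; exact Nat.mod_modEq _ _)

lemma iotaZ_eq_natCast {F : Type} [Field F] [DecidableEq F] (k : ℕ) (e : F) :
    iotaZ k e = (iotaN e : ZMod (2 ^ k)) := by
  unfold iotaZ iotaN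
  split_ifs <;> simp

lemma iotaN_zero {F : Type} [Field F] [DecidableEq F] : iotaN (0 : F) = 0 :=
  if_neg zero_ne_one

lemma Tr_zero {F : Type} [Field F] (n : ℕ) : Tr n (0 : F) = 0 :=
  Finset.sum_eq_zero fun i _ => zero_pow (Nat.two_pow_pos i).ne'

lemma sig_zero_left {F : Type} [Field F] (n : ℕ) (x : F) : sig n 0 x = 0 := by
  simp [sig]

lemma odd_of_mul_modEq_one_four {a b : ℕ} (h : a * b ≡ 1 [MOD 4]) : Odd a :=
  (Nat.odd_mul.1 (Nat.odd_iff.2 (Nat.ModEq.of_mul_right 2 (n := 2) h))).1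

section Transforms

variable {F : Type} [Field F] [Fintype F] [DecidableEq F] {n k : ℕ}

lemma negaK_eq_gWH_of_mul_modEq_one (hk : 2 ≤ k) (f g : F → ZMod (2 ^ k)) (a : ℕ)
    (hg : ∀ x, g x = f x + (a : ZMod (2 ^ k)) * 2 ^ (k - 2) * iotaZ k (Tr n x) +
      2 ^ (k - 1) * iotaZ k (sig n 1 x))
    {c : ZMod (2 ^ k)} (hc : c.val * a ≡ 1 [MOD 4]) (u : F) :
    negaK n k f c u = gWH n k g c u := by
  have hodd : c.val ≡ 1 [MOD 2] := Nat.odd_iff.1 (odd_of_mul_modEq_one_four hc)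
  unfold negaK gWH
  refine Finset.sum_congr rfl fun x _ => ?_
  set t := iotaN (Tr n x)
  set s := iotaN (sig n 1 x)
  have hshift : c * g x =
      c * f x + ((2 ^ (k - 2) * (c.val * a * t + c.val * s * 2) : ℕ) : ZMod (2 ^ k)) := by
    have h2 : (2 : ZMod (2 ^ k)) ^ (k - 1) = 2 ^ (k - 2) * 2 := by
      rw [← pow_succ]; congr 1; omega
    rw [hg x, iotaZ_eq_natCast, iotaZ_eq_natCast, h2]
    push_cast [ZMod.natCast_zmod_val]
    ring
  have hmod : c.val * a * t + c.val * s * 2 ≡ t + s * 2 [MOD 2 ^ 2] := by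
    simpa using (hc.mul_right t).add (Nat.ModEq.mul_right' 2 (hodd.mul_right s))
  have hcz : czero k c = (1 : F) := if_pos hodd
  rw [hcz, one_mul, hshift, zeta_pow_val_add, zeta_pow_val_natCast, pow_mul,
    zeta_pow_two_pow (by omega : k - 2 ≤ k), show k - (k - 2) = 2 by omega,
    zeta_pow_eq_of_modEq 2 hmod, zeta_two, pow_add Complex.I, pow_mul' Complex.I, Complex.I_sq,
    pow_add (-1 : ℂ)]
  ring

lemma negaK_eq_gWH_of_val_eq_two_mul (hk : 1 ≤ k) (f : F → ZMod (2 ^ k))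
    (ftilde : F → ZMod (2 ^ (k - 1))) (hft : ∀ x, ftilde x = ((f x).val : ZMod (2 ^ (k - 1))))
    {c : ZMod (2 ^ k)} {c' : ZMod (2 ^ (k - 1))} (hcc : c.val = 2 * c'.val) (u : F) :
    negaK n k f c u = gWH n (k - 1) ftilde c' u := by
  unfold negaK gWH
  refine Finset.sum_congr rfl fun x _ => ?_
  have hζ : zeta k ^ (c * f x).val = zeta (k - 1) ^ (c' * ftilde x).val := by
    have hsq : zeta k ^ 2 = zeta (k - 1) := by simpa using zeta_pow_two_pow (j := 1) hk
    rw [zeta_pow_val_mul, zeta_pow_val_mul, hcc, hft x, ZMod.val_natCast, mul_assoc, pow_mul, hsq]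
    exact zeta_pow_eq_of_modEq _ (Nat.ModEq.mul_left _ (Nat.mod_modEq _ _).symm)
  have hcz : czero k c = (0 : F) := if_neg (by omega)
  rw [hcz, zero_mul, Tr_zero, sig_zero_left, iotaN_zero, add_zero, pow_zero, mul_one, hζ, mul_comm]

end Transforms

section Galois

variable {F : Type} [Field F] [Fintype F] [DecidableEq F] {n k : ℕ}

lemma gWH_eq_aeval (g : F → ZMod (2 ^ k)) (c : ZMod (2 ^ k)) (u : F) :
    gWH n k g c u =
      aeval (zeta k ^ c.val) (∑ x : F, (-1 : ℚ[X]) ^ iotaN (Tr n (u * x)) * X ^ (g x).val) := by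
  simp only [gWH, map_sum, map_mul, map_pow, map_neg, map_one, aeval_X, ← pow_mul,
    zeta_pow_val_mul, mul_comm]

lemma norm_gWH_eq_sqrt_of_odd (g : F → ZMod (2 ^ k)) {c c' : ZMod (2 ^ k)} (hc : Odd c.val)
    (hc' : Odd c'.val) {u : F} (h : ‖gWH n k g c u‖ = √(2 ^ n)) :
    ‖gWH n k g c' u‖ = √(2 ^ n) := by
  have hprim : ∀ {d : ZMod (2 ^ k)}, Odd d.val → IsPrimitiveRoot (zeta k ^ d.val) (2 ^ k) :=
    fun hd => (isPrimitiveRoot_zeta k).pow_of_coprime _ (Nat.Coprime.pow_right _ (by simpa))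
  rw [gWH_eq_aeval, Complex.norm_def, Real.sqrt_inj (Complex.normSq_nonneg _) (by positivity)]
    at h ⊢
  exact_mod_cast (hprim hc).normSq_aeval_eq_of_eq_ratCast (Nat.two_pow_pos k) (hprim hc') _
    (r := 2 ^ n) (by exact_mod_cast h)

end Galois

section ZModTwoPow

variable {k : ℕ}

lemma ZMod.ne_zero_of_odd_val {N : ℕ} {c : ZMod N} (hc : Odd c.val) : c ≠ 0 := by
  rintro rfl
  simp at hc

lemma exists_zmod_val_mul_three_modEq_one (hk : 2 ≤ k) :
    ∃ c : ZMod (2 ^ k), c.val * 3 ≡ 1 [MOD 4] := by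
  have h3 : 3 < 2 ^ k := lt_of_lt_of_le (by norm_num) (Nat.pow_le_pow_right two_pos hk)
  exact ⟨(3 : ℕ), by rw [ZMod.val_natCast_of_lt h3]; rfl⟩

lemma two_pow_eq_two_mul_two_pow_pred (hk : 1 ≤ k) : 2 ^ k = 2 * 2 ^ (k - 1) := by
  rw [← pow_succ']
  congr 1
  omega

lemma exists_zmod_val_eq_two_mul (hk : 1 ≤ k) (c' : ZMod (2 ^ (k - 1))) :
    ∃ c : ZMod (2 ^ k), c.val = 2 * c'.val := by
  have := c'.val_lt
  have := two_pow_eq_two_mul_two_pow_pred hk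
  exact ⟨(2 * c'.val : ℕ), ZMod.val_natCast_of_lt (by omega)⟩

lemma exists_zmod_val_eq_two_mul_of_even (hk : 1 ≤ k) {c : ZMod (2 ^ k)} (hc : Even c.val) :
    ∃ c' : ZMod (2 ^ (k - 1)), c.val = 2 * c'.val := by
  obtain ⟨r, hr⟩ := hc
  have := c.val_lt
  have := two_pow_eq_two_mul_two_pow_pred hk
  exact ⟨(r : ℕ), by rw [ZMod.val_natCast_of_lt (by omega)]; omega⟩

end ZModTwoPow

theorem stmt9_general {F : Type} [Field F] [Fintype F] [DecidableEq F] (n k : ℕ)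
    (hk : 2 ≤ k)
    (f : F → ZMod (2 ^ k))
    (g h : F → ZMod (2 ^ k)) (ftilde : F → ZMod (2 ^ (k - 1)))
    (hg : ∀ x, g x = f x + 2 ^ (k - 2) * iotaZ k (Tr n x) +
      2 ^ (k - 1) * iotaZ k (sig n 1 x))
    (hh : ∀ x, h x = g x + 2 ^ (k - 1) * iotaZ k (Tr n x))
    (hft : ∀ x, ftilde x = ((f x).val : ZMod (2 ^ (k - 1)))) :
    (∀ u : F, ∀ c : ZMod (2 ^ k), c ≠ 0 →
        ‖negaK n k f c u‖ = Real.sqrt (2 ^ n)) ↔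
      ((∀ u : F, ‖gWH n k g 1 u‖ = Real.sqrt (2 ^ n)) ∧
       (∀ u : F, ‖gWH n k h 1 u‖ = Real.sqrt (2 ^ n)) ∧
       (∀ u : F, ∀ c : ZMod (2 ^ (k - 1)), c ≠ 0 →
          ‖gWH n (k - 1) ftilde c u‖ = Real.sqrt (2 ^ n))) := by
  have hg1 : ∀ x, g x = f x + ((1 : ℕ) : ZMod (2 ^ k)) * 2 ^ (k - 2) * iotaZ k (Tr n x) +
      2 ^ (k - 1) * iotaZ k (sig n 1 x) := fun x => by rw [hg x, Nat.cast_one, one_mul]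
  have hh3 : ∀ x, h x = f x + ((3 : ℕ) : ZMod (2 ^ k)) * 2 ^ (k - 2) * iotaZ k (Tr n x) +
      2 ^ (k - 1) * iotaZ k (sig n 1 x) := fun x => by
    rw [hh x, hg x, show k - 1 = k - 2 + 1 by omega, pow_succ]
    push_cast
    ring
  have : Fact (1 < 2 ^ k) := ⟨Nat.one_lt_two_pow (by omega)⟩
  have hone : (1 : ZMod (2 ^ k)).val = 1 := ZMod.val_one _
  have hodd_one : Odd (1 : ZMod (2 ^ k)).val := by rw [hone]; exact odd_one
  constructor
  · intro H
    refine ⟨fun u => ?_, fun u => ?_, fun u c' hc' => ?_⟩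
    · rw [← negaK_eq_gWH_of_mul_modEq_one hk f g 1 hg1 (by rw [hone]) u]
      exact H u 1 one_ne_zero
    · obtain ⟨c, hc⟩ := exists_zmod_val_mul_three_modEq_one hk
      have hodd := odd_of_mul_modEq_one_four hc
      refine norm_gWH_eq_sqrt_of_odd h hodd hodd_one ?_
      rw [← negaK_eq_gWH_of_mul_modEq_one hk f h 3 hh3 hc u]
      exact H u c (ZMod.ne_zero_of_odd_val hodd)
    · obtain ⟨c, hc⟩ := exists_zmod_val_eq_two_mul (by omega) c'
      rw [← negaK_eq_gWH_of_val_eq_two_mul (by omega) f ftilde hft hc u]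
      exact H u c fun h0 => hc' ((ZMod.val_eq_zero c').1 (by simpa [h0] using hc))
  · rintro ⟨Hg, Hh, Hf⟩ u c hc0
    rcases Nat.even_or_odd c.val with heven | hodd
    · obtain ⟨c', hc'⟩ := exists_zmod_val_eq_two_mul_of_even (by omega) heven
      rw [negaK_eq_gWH_of_val_eq_two_mul (by omega) f ftilde hft hc' u]
      exact Hf u c' fun h0 => hc0 ((ZMod.val_eq_zero c).1 (by simp [hc', h0]))
    · rcases Nat.odd_mod_four_iff.1 (Nat.odd_iff.1 hodd) with h1 | h3
      · rw [negaK_eq_gWH_of_mul_modEq_one hk f g 1 hg1 (by rwa [mul_one]) u]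
        exact norm_gWH_eq_sqrt_of_odd g hodd_one hodd (Hg u)
      · rw [negaK_eq_gWH_of_mul_modEq_one hk f h 3 hh3 (by unfold Nat.ModEq; omega) u]
        exact norm_gWH_eq_sqrt_of_odd h hodd_one hodd (Hh u)

/-- f is nega-ℤ_{2^k}-bent iff (1) g is gbent, (2) h is gbent, and
(3) the reduction f̃ of f modulo 2^{k−1} is ℤ_{2^{k−1}}-bent, where
g(x) = f(x) + 2^{k−2}·ι(Tr(x)) + 2^{k−1}·ι(σ(1,x)) and
h(x) = g(x) + 2^{k−1}·ι(Tr(x)). -/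
theorem stmt9 {F : Type} [Field F] [Fintype F] [DecidableEq F] (n k : ℕ)
    (hn : 1 ≤ n) (hk : 2 ≤ k) (hF : Fintype.card F = 2 ^ n)
    (f : F → ZMod (2 ^ k))
    (g h : F → ZMod (2 ^ k)) (ftilde : F → ZMod (2 ^ (k - 1)))
    (hg : ∀ x, g x = f x + 2 ^ (k - 2) * iotaZ k (Tr n x) +
      2 ^ (k - 1) * iotaZ k (sig n 1 x))
    (hh : ∀ x, h x = g x + 2 ^ (k - 1) * iotaZ k (Tr n x))
    (hft : ∀ x, ftilde x = ((f x).val : ZMod (2 ^ (k - 1)))) :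
    (∀ u : F, ∀ c : ZMod (2 ^ k), c ≠ 0 →
        ‖negaK n k f c u‖ = Real.sqrt (2 ^ n)) ↔
      ((∀ u : F, ‖gWH n k g 1 u‖ = Real.sqrt (2 ^ n)) ∧
       (∀ u : F, ‖gWH n k h 1 u‖ = Real.sqrt (2 ^ n)) ∧
       (∀ u : F, ∀ c : ZMod (2 ^ (k - 1)), c ≠ 0 →
          ‖gWH n (k - 1) ftilde c u‖ = Real.sqrt (2 ^ n))) :=
  stmt9_general n k hk f g h ftilde hg hh hft
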